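/- Let n = 1, m > 0 and θ = 1/2. Then there exist positive constants C₁, C₂ and t₀ > 1 such that for all t ≥ t₀ and all P₁ ∈ ℝ, (C₁/(m²+2)) P₁² log t ≤ ∫_{|ξ| ≤ 1} |φ(t,ξ)|² dξ ≤ (C₂/m²) P₁² log t. -/

import Mathlib

/-!
With `θ = 1/2` one has `φ² = P₁² e^{-r²t} sin²(t√Q(r)) / Q(r)` for `r = |ξ|` and
`Q(r) = r² + m² log (1 + r)`, and `m² r / 2 ≤ Q(r) ≤ (1 + m²) r` on `[0, 1]`.

Upper bound: the integrand is at most `t²` (as `sin² x ≤ x²`) and at most `2 / (m² r)`;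
splitting `[0, 1]` at `r = t⁻²` gives `1 + 4 m⁻² log t`.

Lower bound: on `[1/t, 1/√t]` write `sin² = (1 - cos)/2`. There `e^{-r²t} ≥ e⁻¹`, so the
non-oscillating half is at least `log t / (4e(1 + m²))`. The oscillating half is
`cos(2t√Q) e^{-r²t}/Q = a · (sin 2t√Q)'` with `a = e^{-r²t} / (t √Q Q')`, which is decreasing
as long as `r ≤ m² / (8(1 + m²))`; integrating by parts bounds it by
`2 a(1/t) = O(t^{-1/2})`.
-/

open MeasureTheory Real

noncomputable section

/-- Euclidean space `ℝⁿ`. -/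
abbrev E (n : ℕ) := EuclideanSpace ℝ (Fin n)

/-- The asymptotic profile `φ(t,ξ)`, as a function of `r = |ξ|`. -/
def phi (m θ P₁ t r : ℝ) : ℝ :=
  P₁ * Real.exp (-(r ^ 2) * t / 2) *
    Real.sin (t * Real.sqrt (r ^ 2 + m ^ 2 * Real.log (1 + r ^ (2 * θ)))) /
    Real.sqrt (r ^ 2 + m ^ 2 * Real.log (1 + r ^ (2 * θ)))

open Set Filter

theorem abs_integral_mul_deriv_le_of_deriv_nonpos {ψ ψ' v v' : ℝ → ℝ} {a b : ℝ}
    (hab : a ≤ b) (hψ : ∀ x ∈ Icc a b, HasDerivAt ψ (ψ' x) x) (hψ' : ∀ x ∈ Icc a b, ψ' x ≤ 0)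
    (hψb : 0 ≤ ψ b) (hv : ∀ x ∈ Icc a b, HasDerivAt v (v' x) x)
    (hv1 : ∀ x ∈ Icc a b, |v x| ≤ 1)
    (hψv' : IntervalIntegrable (fun x => ψ x * v' x) volume a b) :
    |∫ x in a..b, ψ x * v' x| ≤ 2 * ψ a := by
  rw [← uIcc_of_le hab] at hψ hψ' hv hv1
  have hψ'_int : IntervalIntegrable ψ' volume a b := by
    have := intervalIntegral.intervalIntegrable_deriv_of_nonneg (g := fun x => -ψ x)
      (g' := fun x => -ψ' x)
      (HasDerivAt.continuousOn fun x hx => (hψ x hx).neg)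
      (fun x hx => (hψ x (Ioo_subset_Icc_self hx)).neg)
      (fun x hx => neg_nonneg.2 (hψ' x (Ioo_subset_Icc_self hx)))
    convert this.neg using 1
    ext x; simp
  have hψ'v_int : IntervalIntegrable (fun x => ψ' x * v x) volume a b :=
    hψ'_int.mul_continuousOn (HasDerivAt.continuousOn hv)
  have hparts :
      ∫ x in a..b, ψ x * v' x = ψ b * v b - ψ a * v a - ∫ x in a..b, ψ' x * v x := by
    rw [eq_sub_iff_add_eq, ← intervalIntegral.integral_add hψv' hψ'v_int]
    simpa only [add_comm, Pi.mul_apply] using intervalIntegral.integral_eq_sub_of_hasDerivAt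
      (fun x hx => (hψ x hx).mul (hv x hx)) (hψ'v_int.add hψv')
  have hftc : ∫ x in a..b, -ψ' x = ψ a - ψ b := by
    rw [intervalIntegral.integral_neg, intervalIntegral.integral_eq_sub_of_hasDerivAt hψ hψ'_int]
    ring
  have hrest : |∫ x in a..b, ψ' x * v x| ≤ ψ a - ψ b := by
    rw [← hftc, ← Real.norm_eq_abs]
    refine intervalIntegral.norm_integral_le_of_norm_le hab
      (Eventually.of_forall fun x hx => ?_) hψ'_int.neg
    replace hx : x ∈ uIcc a b := by rw [uIcc_of_le hab]; exact Ioc_subset_Icc_self hx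
    rw [Real.norm_eq_abs, abs_mul, abs_of_nonpos (hψ' x hx)]
    nlinarith [hv1 x hx, abs_nonneg (v x), hψ' x hx]
  have hψa : 0 ≤ ψ a := by linarith [abs_nonneg (∫ x in a..b, ψ' x * v x)]
  have hbdry (x : ℝ) (hx : x ∈ uIcc a b) (hψx : 0 ≤ ψ x) : |ψ x * v x| ≤ ψ x := by
    rw [abs_mul, abs_of_nonneg hψx]; exact mul_le_of_le_one_right hψx (hv1 x hx)
  have hb := hbdry b right_mem_uIcc hψb
  have ha := hbdry a left_mem_uIcc hψa
  rw [hparts]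
  calc |ψ b * v b - ψ a * v a - ∫ x in a..b, ψ' x * v x|
      ≤ |ψ b * v b| + |ψ a * v a| + |∫ x in a..b, ψ' x * v x| :=
        (abs_sub _ _).trans (add_le_add_left (abs_sub _ _) _)
    _ ≤ 2 * ψ a := by linarith

theorem integral_Icc_comp_abs (f : ℝ → ℝ) {c : ℝ} (hc : 0 ≤ c) :
    ∫ x in Icc (-c) c, f |x| = 2 * ∫ x in 0..c, f x := by
  have hind : (Icc (-c) c).indicator (fun x => f |x|) = fun x => (Iic c).indicator f |x| := by
    ext x
    simp only [indicator, mem_Icc, mem_Iic, abs_le]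
  rw [← MeasureTheory.integral_indicator measurableSet_Icc, hind, integral_comp_abs,
    setIntegral_indicator measurableSet_Iic, Ioi_inter_Iic, intervalIntegral.integral_of_le hc]

namespace LogProfile

variable {m t r : ℝ}

def Q (m r : ℝ) : ℝ := r ^ 2 + m ^ 2 * log (1 + r)

def Q' (m r : ℝ) : ℝ := 2 * r + m ^ 2 / (1 + r)

def profileSq (m t r : ℝ) : ℝ := exp (-(r ^ 2) * t) * sin (t * √(Q m r)) ^ 2 / Q m r

theorem hasDerivAt_Q (m : ℝ) (hr : -1 < r) : HasDerivAt (Q m) (Q' m r) r := by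
  have h1 : HasDerivAt (fun r : ℝ => 1 + r) 1 r := (hasDerivAt_id r).const_add 1
  refine ((hasDerivAt_pow 2 r).add ((h1.log (by linarith)).const_mul (m ^ 2))).congr_deriv ?_
  rw [Q']; norm_num; ring

theorem hasDerivAt_Q' (m : ℝ) (hr : -1 < r) :
    HasDerivAt (Q' m) (2 - m ^ 2 / (1 + r) ^ 2) r := by
  have h1 : HasDerivAt (fun r : ℝ => 1 + r) 1 r := (hasDerivAt_id r).const_add 1
  refine (((hasDerivAt_id r).const_mul 2).add
    ((h1.inv (by linarith)).const_mul (m ^ 2))).congr_deriv ?_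
  ring

theorem Q_nonneg (m : ℝ) (hr : 0 ≤ r) : 0 ≤ Q m r := by
  have := log_nonneg (by linarith : (1 : ℝ) ≤ 1 + r)
  unfold Q; positivity

theorem Q_pos (m : ℝ) (hr : 0 < r) : 0 < Q m r := by
  have := log_nonneg (by linarith : (1 : ℝ) ≤ 1 + r)
  unfold Q; positivity

theorem Q_le (m : ℝ) (hr0 : 0 ≤ r) (hr1 : r ≤ 1) : Q m r ≤ (1 + m ^ 2) * r := by
  have := log_le_sub_one_of_pos (by linarith : 0 < 1 + r)
  unfold Q; nlinarith [sq_nonneg m]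

theorem le_Q (m : ℝ) (hr0 : 0 ≤ r) (hr1 : r ≤ 1) : m ^ 2 * r / 2 ≤ Q m r := by
  have h := le_log_one_add_of_nonneg hr0
  have : r / 2 ≤ 2 * r / (r + 2) := by rw [le_div_iff₀ (by linarith)]; nlinarith
  unfold Q; nlinarith [sq_nonneg m]

theorem le_Q' (m : ℝ) (hr0 : 0 ≤ r) (hr1 : r ≤ 1) : m ^ 2 / 2 ≤ Q' m r := by
  have : m ^ 2 / 2 ≤ m ^ 2 / (1 + r) := by gcongr; linarith
  unfold Q'; linarith

theorem Q'_pos (hm : 0 < m) (hr0 : 0 ≤ r) (hr1 : r ≤ 1) : 0 < Q' m r :=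
  (half_pos (pow_pos hm 2)).trans_le (le_Q' m hr0 hr1)

/-- Below this threshold `√Q · Q'` is increasing. -/
def threshold (m : ℝ) : ℝ := m ^ 2 / (8 * (1 + m ^ 2))

theorem threshold_pos (hm : 0 < m) : 0 < threshold m := by
  unfold threshold; positivity

theorem threshold_le_one (m : ℝ) : threshold m ≤ 1 := by
  rw [threshold, div_le_one (by positivity)]; nlinarith [sq_nonneg m]

theorem sq_Q'_add_two_mul_Q_mul_nonneg (hr0 : 0 ≤ r) (hr : r ≤ threshold m) :
    0 ≤ Q' m r ^ 2 + 2 * Q m r * (2 - m ^ 2 / (1 + r) ^ 2) := by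
  have hr1 := hr.trans (threshold_le_one m)
  have hQ' : (m ^ 2 / 2) ^ 2 ≤ Q' m r ^ 2 :=
    pow_le_pow_left₀ (by positivity) (le_Q' m hr0 hr1) 2
  have hdd : -m ^ 2 ≤ 2 - m ^ 2 / (1 + r) ^ 2 := by
    have : m ^ 2 / (1 + r) ^ 2 ≤ m ^ 2 := div_le_self (sq_nonneg m) (by nlinarith)
    linarith
  have hQ := Q_le m hr0 hr1
  have hthr : 8 * (1 + m ^ 2) * r ≤ m ^ 2 := by
    rwa [threshold, le_div_iff₀ (by positivity), mul_comm] at hr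
  nlinarith [Q_nonneg m hr0, sq_nonneg m, mul_le_mul_of_nonneg_left hdd (Q_nonneg m hr0)]

theorem phi_sq (m P₁ t : ℝ) (hr : 0 ≤ r) :
    phi m (1 / 2) P₁ t r ^ 2 = P₁ ^ 2 * profileSq m t r := by
  have hpow : r ^ (2 * (1 / 2 : ℝ)) = r := by norm_num
  have hexp : exp (-(r ^ 2) * t / 2) ^ 2 = exp (-(r ^ 2) * t) := by
    rw [← exp_nat_mul]; ring_nf
  rw [phi, hpow, div_pow, mul_pow, mul_pow, hexp, profileSq, ← Q, sq_sqrt (Q_nonneg m hr)]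
  ring

theorem profileSq_nonneg (m t : ℝ) (hr : 0 ≤ r) : 0 ≤ profileSq m t r := by
  have := Q_nonneg m hr
  unfold profileSq; positivity

theorem profileSq_le_sq (m : ℝ) (ht : 0 ≤ t) (hr : 0 ≤ r) : profileSq m t r ≤ t ^ 2 := by
  rcases hr.eq_or_lt with rfl | hr
  · simp [profileSq, Q]; positivity
  have hQ := Q_pos m hr
  have hexp : exp (-(r ^ 2) * t) ≤ 1 := exp_le_one_iff.2 (by nlinarith)
  have hsin : sin (t * √(Q m r)) ^ 2 ≤ t ^ 2 * Q m r := by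
    simpa [mul_pow, sq_sqrt hQ.le] using sin_sq_le_sq (x := t * √(Q m r))
  rw [profileSq, div_le_iff₀ hQ]
  calc exp (-(r ^ 2) * t) * sin (t * √(Q m r)) ^ 2
      ≤ 1 * (t ^ 2 * Q m r) := mul_le_mul hexp hsin (sq_nonneg _) zero_le_one
    _ = t ^ 2 * Q m r := one_mul _

theorem profileSq_le_inv (hm : 0 < m) (ht : 0 ≤ t) (hr0 : 0 < r) (hr1 : r ≤ 1) :
    profileSq m t r ≤ 2 / m ^ 2 * r⁻¹ := by
  have hQ := le_Q m hr0.le hr1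
  have hexp : exp (-(r ^ 2) * t) ≤ 1 := exp_le_one_iff.2 (by nlinarith)
  have hnum : exp (-(r ^ 2) * t) * sin (t * √(Q m r)) ^ 2 ≤ 1 :=
    mul_le_one₀ hexp (sq_nonneg _) (sin_sq_le_one _)
  calc profileSq m t r ≤ 1 / (m ^ 2 * r / 2) :=
        div_le_div₀ zero_le_one hnum (by positivity) hQ
    _ = 2 / m ^ 2 * r⁻¹ := by field_simp

theorem intervalIntegrable_profileSq (m : ℝ) (ht : 0 ≤ t) {a b : ℝ} (ha : 0 ≤ a)
    (hb : 0 ≤ b) :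
    IntervalIntegrable (profileSq m t) volume a b := by
  have hmeas : Measurable (profileSq m t) := by unfold profileSq Q; fun_prop
  refine (intervalIntegrable_const (c := t ^ 2)).mono_fun' hmeas.aestronglyMeasurable ?_
  refine (ae_restrict_iff' measurableSet_uIoc).2 (Eventually.of_forall fun x hx => ?_)
  dsimp only
  have hx : 0 ≤ x := (le_min ha hb).trans (uIoc_subset_uIcc hx).1
  rw [Real.norm_eq_abs, abs_of_nonneg (profileSq_nonneg m t hx)]
  exact profileSq_le_sq m ht hx

theorem integral_profileSq_le (hm : 0 < m) (ht : 1 ≤ t) :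
    ∫ r in 0..1, profileSq m t r ≤ 1 + 4 / m ^ 2 * log t := by
  have ht0 : 0 < t := by linarith
  set δ : ℝ := (t ^ 2)⁻¹ with hδ
  have hδ0 : 0 < δ := by positivity
  have hδ1 : δ ≤ 1 := inv_le_one_of_one_le₀ (one_le_pow₀ ht)
  have hnear : ∫ r in 0..δ, profileSq m t r ≤ 1 := by
    calc ∫ r in 0..δ, profileSq m t r ≤ ∫ _ in 0..δ, t ^ 2 :=
          intervalIntegral.integral_mono_on hδ0.le
            (intervalIntegrable_profileSq m ht0.le le_rfl hδ0.le) intervalIntegrable_const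
            fun r hr => profileSq_le_sq m ht0.le hr.1
      _ = 1 := by simp [hδ, ht0.ne']
  have hfar : ∫ r in δ..1, profileSq m t r ≤ 4 / m ^ 2 * log t := by
    calc ∫ r in δ..1, profileSq m t r ≤ ∫ r in δ..1, 2 / m ^ 2 * r⁻¹ := by
          refine intervalIntegral.integral_mono_on hδ1
            (intervalIntegrable_profileSq m ht0.le hδ0.le zero_le_one) ?_
            fun r hr => profileSq_le_inv hm ht0.le (hδ0.trans_le hr.1) hr.2
          refine (intervalIntegrable_inv_iff.2 (Or.inr fun h0 => ?_)).const_mul _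
          exact hδ0.not_ge (uIcc_of_le hδ1 ▸ h0).1
      _ = 4 / m ^ 2 * log t := by
          rw [intervalIntegral.integral_const_mul, integral_inv_of_pos hδ0 one_pos, hδ, one_div,
            inv_inv, log_pow]
          push_cast; ring
  rw [← intervalIntegral.integral_add_adjacent_intervals
    (intervalIntegrable_profileSq m ht0.le le_rfl hδ0.le)
    (intervalIntegrable_profileSq m ht0.le hδ0.le zero_le_one)]
  linarith

theorem hasDerivAt_sqrt_Q (m : ℝ) (hr : 0 < r) :
    HasDerivAt (fun r => √(Q m r)) (Q' m r / (2 * √(Q m r))) r :=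
  (hasDerivAt_Q m (by linarith)).sqrt (Q_pos m hr).ne'

theorem continuousOn_sqrt_Q (m : ℝ) : ContinuousOn (fun r => √(Q m r)) (Ioi 0) :=
  fun _ hr => (hasDerivAt_sqrt_Q m hr).continuousAt.continuousWithinAt

theorem continuousOn_exp_div_Q (m t : ℝ) :
    ContinuousOn (fun r => exp (-(r ^ 2) * t) / Q m r) (Ioi 0) :=
  (by fun_prop : Continuous fun r : ℝ => exp (-(r ^ 2) * t)).continuousOn.div
    (fun _ hr => (hasDerivAt_Q m (by linarith [mem_Ioi.1 hr])).continuousAt.continuousWithinAt)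
    fun _ hr => (Q_pos m hr).ne'

theorem continuousOn_cos_mul_exp_div_Q (m t : ℝ) :
    ContinuousOn (fun r => cos (2 * t * √(Q m r)) * (exp (-(r ^ 2) * t) / Q m r)) (Ioi 0) :=
  (continuous_cos.comp_continuousOn ((continuousOn_sqrt_Q m).const_smul (2 * t))).mul
    (continuousOn_exp_div_Q m t)

/-- Chosen so that `cos (2t√Q) · e^{-r²t} / Q = amplitude · (sin (2t√Q))'`. -/
def amplitude (m t r : ℝ) : ℝ := exp (-(r ^ 2) * t) / (t * √(Q m r) * Q' m r)

theorem amplitude_nonneg (hm : 0 < m) (ht : 0 ≤ t) (hr0 : 0 ≤ r) (hr1 : r ≤ 1) :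
    0 ≤ amplitude m t r := by
  have := Q'_pos hm hr0 hr1
  unfold amplitude; positivity

theorem hasDerivAt_sin_sqrt_Q (m t : ℝ) (hr : 0 < r) :
    HasDerivAt (fun r => sin (2 * t * √(Q m r)))
      (cos (2 * t * √(Q m r)) * (2 * t * (Q' m r / (2 * √(Q m r))))) r :=
  ((hasDerivAt_sqrt_Q m hr).const_mul (2 * t)).sin

theorem amplitude_mul_deriv (hm : 0 < m) (ht : t ≠ 0) (hr0 : 0 < r) (hr1 : r ≤ 1) :
    amplitude m t r * (cos (2 * t * √(Q m r)) * (2 * t * (Q' m r / (2 * √(Q m r))))) =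
      cos (2 * t * √(Q m r)) * (exp (-(r ^ 2) * t) / Q m r) := by
  have hQ := Q_pos m hr0
  have hQ' := Q'_pos hm hr0.le hr1
  rw [amplitude]
  field_simp
  rw [sq_sqrt hQ.le, mul_comm]

theorem hasDerivAt_amplitude_and_deriv_nonpos (hm : 0 < m) (ht : 0 < t) (hr0 : 0 < r)
    (hr : r ≤ threshold m) :
    HasDerivAt (amplitude m t) (deriv (amplitude m t) r) r ∧ deriv (amplitude m t) r ≤ 0 := by
  have hr1 := hr.trans (threshold_le_one m)
  have hQ := Q_pos m hr0
  have hQ' := Q'_pos hm hr0.le hr1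
  have hE : HasDerivAt (fun r => exp (-(r ^ 2) * t)) (-(2 * r * t) * exp (-(r ^ 2) * t)) r :=
    ((hasDerivAt_pow 2 r).neg.mul_const t).exp.congr_deriv (by simp; ring)
  have hD : HasDerivAt (fun r => t * √(Q m r) * Q' m r)
      (t * (Q' m r / (2 * √(Q m r))) * Q' m r + t * √(Q m r) * (2 - m ^ 2 / (1 + r) ^ 2)) r :=
    ((hasDerivAt_sqrt_Q m hr0).const_mul t).mul (hasDerivAt_Q' m (by linarith))
  have hD_pos : 0 < t * √(Q m r) * Q' m r := by positivity
  have hdiv := hE.div hD hD_pos.ne'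
  refine ⟨hdiv.differentiableAt.hasDerivAt, hdiv.deriv ▸ ?_⟩
  have hD' : 0 ≤ t * (Q' m r / (2 * √(Q m r))) * Q' m r +
      t * √(Q m r) * (2 - m ^ 2 / (1 + r) ^ 2) := by
    have key := sq_Q'_add_two_mul_Q_mul_nonneg hr0.le hr
    have : t * (Q' m r / (2 * √(Q m r))) * Q' m r + t * √(Q m r) * (2 - m ^ 2 / (1 + r) ^ 2)
        = t / (2 * √(Q m r)) * (Q' m r ^ 2 + 2 * Q m r * (2 - m ^ 2 / (1 + r) ^ 2)) := by
      field_simp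
      rw [sq_sqrt hQ.le]; ring
    rw [this]; positivity
  refine div_nonpos_of_nonpos_of_nonneg ?_ (sq_nonneg _)
  have hE_pos := exp_pos (-(r ^ 2) * t)
  have h1 : 0 ≤ 2 * r * t * exp (-(r ^ 2) * t) * (t * √(Q m r) * Q' m r) := by positivity
  nlinarith [mul_nonneg hE_pos.le hD']

theorem abs_integral_cos_mul_exp_div_Q_le (hm : 0 < m) (ht : 0 < t) {a b : ℝ} (ha : 0 < a)
    (hab : a ≤ b) (hb : b ≤ threshold m) :
    |∫ r in a..b, cos (2 * t * √(Q m r)) * (exp (-(r ^ 2) * t) / Q m r)| ≤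
      2 * amplitude m t a := by
  have hmem : ∀ x ∈ Icc a b, 0 < x ∧ x ≤ threshold m :=
    fun x hx => ⟨ha.trans_le hx.1, hx.2.trans hb⟩
  have hone := threshold_le_one m
  have heq : EqOn (fun r => cos (2 * t * √(Q m r)) * (exp (-(r ^ 2) * t) / Q m r))
      (fun r => amplitude m t r *
        (cos (2 * t * √(Q m r)) * (2 * t * (Q' m r / (2 * √(Q m r)))))) (uIcc a b) := by
    intro x hx
    rw [uIcc_of_le hab] at hx
    exact (amplitude_mul_deriv hm ht.ne' (hmem x hx).1 ((hmem x hx).2.trans hone)).symm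
  have hint : IntervalIntegrable
      (fun r => cos (2 * t * √(Q m r)) * (exp (-(r ^ 2) * t) / Q m r)) volume a b :=
    ((continuousOn_cos_mul_exp_div_Q m t).mono
      fun x hx => ha.trans_le hx.1).intervalIntegrable_of_Icc hab
  rw [intervalIntegral.integral_congr heq]
  exact abs_integral_mul_deriv_le_of_deriv_nonpos hab
    (fun x hx => (hasDerivAt_amplitude_and_deriv_nonpos hm ht (hmem x hx).1 (hmem x hx).2).1)
    (fun x hx => (hasDerivAt_amplitude_and_deriv_nonpos hm ht (hmem x hx).1 (hmem x hx).2).2)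
    (amplitude_nonneg hm ht.le (ha.le.trans hab) (hb.trans hone))
    (fun x hx => hasDerivAt_sin_sqrt_Q m t (hmem x hx).1) (fun x _ => abs_sin_le_one _)
    ((intervalIntegrable_congr (heq.mono uIoc_subset_uIcc)).1 hint)

theorem amplitude_inv_le (hm : 0 < m) (ht : 1 ≤ t) :
    amplitude m t t⁻¹ ≤ 2 * √2 / m ^ 3 * (√t)⁻¹ := by
  have ht0 : 0 < t := by linarith
  have ha0 : 0 < t⁻¹ := inv_pos.2 ht0
  have ha1 : t⁻¹ ≤ 1 := inv_le_one_of_one_le₀ ht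
  have hsqrtQ : m / (√2 * √t) ≤ √(Q m t⁻¹) := by
    refine le_sqrt_of_sq_le ?_
    calc (m / (√2 * √t)) ^ 2 = m ^ 2 * t⁻¹ / 2 := by
          rw [div_pow, mul_pow, sq_sqrt zero_le_two, sq_sqrt ht0.le]; field_simp
      _ ≤ Q m t⁻¹ := le_Q m ha0.le ha1
  have hexp : exp (-(t⁻¹ ^ 2) * t) ≤ 1 := exp_le_one_iff.2 (by nlinarith [sq_nonneg t⁻¹])
  have hD : t * (m / (√2 * √t)) * (m ^ 2 / 2) ≤ t * √(Q m t⁻¹) * Q' m t⁻¹ :=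
    mul_le_mul (mul_le_mul_of_nonneg_left hsqrtQ ht0.le) (le_Q' m ha0.le ha1) (by positivity)
      (by positivity)
  calc amplitude m t t⁻¹ ≤ 1 / (t * (m / (√2 * √t)) * (m ^ 2 / 2)) :=
        div_le_div₀ zero_le_one hexp (by positivity) hD
    _ = 2 * √2 / m ^ 3 * (√t)⁻¹ := by
        nth_rewrite 1 [← mul_self_sqrt ht0.le]
        field_simp

theorem integral_exp_div_Q_ge (m : ℝ) (ht : 0 ≤ t) {a b : ℝ} (ha : 0 < a) (hab : a ≤ b)
    (hb1 : b ≤ 1) (hbt : b ^ 2 * t ≤ 1) :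
    log (b / a) / (exp 1 * (1 + m ^ 2)) ≤ ∫ r in a..b, exp (-(r ^ 2) * t) / Q m r := by
  have hpos : ∀ x ∈ uIcc a b, 0 < x := fun x hx => ha.trans_le (uIcc_of_le hab ▸ hx).1
  calc log (b / a) / (exp 1 * (1 + m ^ 2))
      = ∫ r in a..b, (exp 1 * (1 + m ^ 2))⁻¹ * r⁻¹ := by
        rw [intervalIntegral.integral_const_mul, integral_inv_of_pos ha (ha.trans_le hab)]
        ring
    _ ≤ ∫ r in a..b, exp (-(r ^ 2) * t) / Q m r := by
        refine intervalIntegral.integral_mono_on hab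
          ((intervalIntegrable_inv_iff.2 (Or.inr fun h0 => (hpos 0 h0).false)).const_mul _)
          ((continuousOn_exp_div_Q m t).mono fun x hx => hpos x hx).intervalIntegrable
          fun r hr => ?_
        have hr0 : 0 < r := ha.trans_le hr.1
        have hexp : exp (-1) ≤ exp (-(r ^ 2) * t) := by
          gcongr
          nlinarith [pow_le_pow_left₀ hr0.le hr.2 2]
        calc (exp 1 * (1 + m ^ 2))⁻¹ * r⁻¹ = exp (-1) / ((1 + m ^ 2) * r) := by
              rw [exp_neg]; field_simp
          _ ≤ exp (-(r ^ 2) * t) / Q m r :=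
              div_le_div₀ (exp_pos _).le hexp (Q_pos m hr0) (Q_le m hr0.le (hr.2.trans hb1))

theorem integral_profileSq_eq (m t : ℝ) {a b : ℝ} (ha : 0 < a) (hab : a ≤ b) :
    ∫ r in a..b, profileSq m t r = (∫ r in a..b, exp (-(r ^ 2) * t) / Q m r) / 2 -
      (∫ r in a..b, cos (2 * t * √(Q m r)) * (exp (-(r ^ 2) * t) / Q m r)) / 2 := by
  have hIcc : Icc a b ⊆ Ioi 0 := fun x hx => ha.trans_le hx.1
  rw [← intervalIntegral.integral_div, ← intervalIntegral.integral_div,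
    ← intervalIntegral.integral_sub
      ((((continuousOn_exp_div_Q m t).mono hIcc).intervalIntegrable_of_Icc hab).div_const _)
      ((((continuousOn_cos_mul_exp_div_Q m t).mono hIcc).intervalIntegrable_of_Icc
        hab).div_const _)]
  congr 1 with r
  rw [profileSq, sin_sq_eq_half_sub, ← mul_assoc]
  ring

theorem integral_profileSq_ge (hm : 0 < m) (ht : 1 ≤ t) (hthr : (√t)⁻¹ ≤ threshold m) :
    log t / (4 * exp 1 * (1 + m ^ 2)) - 2 * √2 / m ^ 3 * (√t)⁻¹ ≤
      ∫ r in 0..1, profileSq m t r := by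
  have ht0 : 0 < t := by linarith
  have ha : 0 < t⁻¹ := inv_pos.2 ht0
  have hab : t⁻¹ ≤ (√t)⁻¹ := inv_anti₀ (sqrt_pos.2 ht0) (sqrt_le_self_iff.2 (Or.inr ht))
  have hb1 : (√t)⁻¹ ≤ 1 := hthr.trans (threshold_le_one m)
  have hbt : (√t)⁻¹ ^ 2 * t ≤ 1 := by
    rw [inv_pow, sq_sqrt ht0.le, inv_mul_cancel₀ ht0.ne']
  have hlog : log ((√t)⁻¹ / t⁻¹) = log t / 2 := by
    rw [div_inv_eq_mul, ← div_eq_inv_mul, div_sqrt, log_sqrt ht0.le]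
  have hsub : ∫ r in t⁻¹..(√t)⁻¹, profileSq m t r ≤ ∫ r in 0..1, profileSq m t r :=
    intervalIntegral.integral_mono_interval ha.le hab hb1
      ((ae_restrict_iff' measurableSet_Ioc).2
        (Eventually.of_forall fun r hr => profileSq_nonneg m t hr.1.le))
      (intervalIntegrable_profileSq m ht0.le le_rfl zero_le_one)
  have hmain := integral_exp_div_Q_ge m ht0.le ha hab hb1 hbt
  have hosc := (le_abs_self _).trans
    (abs_integral_cos_mul_exp_div_Q_le hm ht0 ha hab hthr)
  have hamp := amplitude_inv_le hm ht
  rw [integral_profileSq_eq m t ha hab] at hsub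
  rw [hlog] at hmain
  have : log t / (4 * exp 1 * (1 + m ^ 2)) = log t / 2 / (exp 1 * (1 + m ^ 2)) / 2 := by
    field_simp; ring
  linarith

theorem eventually_log_le_integral_profileSq (hm : 0 < m) :
    ∀ᶠ t in atTop, log t / (8 * exp 1 * (1 + m ^ 2)) ≤ ∫ r in 0..1, profileSq m t r := by
  have hinv : Tendsto (fun t => (√t)⁻¹) atTop (nhds 0) :=
    tendsto_inv_atTop_zero.comp tendsto_sqrt_atTop
  set κ := m ^ 3 / (16 * √2 * exp 1 * (1 + m ^ 2)) with hκ_def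
  have hκ : 0 < κ := by positivity
  filter_upwards [eventually_ge_atTop 1, tendsto_log_atTop.eventually_ge_atTop 1,
    hinv.eventually (ge_mem_nhds (threshold_pos hm)), hinv.eventually (ge_mem_nhds hκ)]
    with t ht hlog hthr hκt
  have herr : 2 * √2 / m ^ 3 * (√t)⁻¹ ≤ log t / (8 * exp 1 * (1 + m ^ 2)) :=
    calc 2 * √2 / m ^ 3 * (√t)⁻¹ ≤ 2 * √2 / m ^ 3 * κ := by gcongr
      _ = 1 / (8 * exp 1 * (1 + m ^ 2)) := by rw [hκ_def]; field_simp; ring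
      _ ≤ log t / (8 * exp 1 * (1 + m ^ 2)) := by gcongr
  have : log t / (4 * exp 1 * (1 + m ^ 2)) = 2 * (log t / (8 * exp 1 * (1 + m ^ 2))) := by
    field_simp; ring
  linarith [integral_profileSq_ge hm ht hthr]

theorem eventually_integral_profileSq_le (hm : 0 < m) :
    ∀ᶠ t in atTop, ∫ r in 0..1, profileSq m t r ≤ (1 + 4 / m ^ 2) * log t := by
  filter_upwards [eventually_ge_atTop 1, tendsto_log_atTop.eventually_ge_atTop 1]
    with t ht hlog
  linarith [integral_profileSq_le hm ht]

end LogProfile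

open LogProfile

/-- Lemma 6.7: log-growth of the profile for `n = 1`, `θ = 1/2`. -/
theorem stmt19 (m : ℝ) (hm : 0 < m) :
    ∃ C₁ C₂ t₀ : ℝ, 0 < C₁ ∧ 0 < C₂ ∧ 1 < t₀ ∧
      ∀ t : ℝ, t₀ ≤ t → ∀ P₁ : ℝ,
        C₁ / (m ^ 2 + 2) * P₁ ^ 2 * Real.log t ≤
            (∫ ξ in {ξ : ℝ | |ξ| ≤ 1}, (phi m (1 / 2) P₁ t |ξ|) ^ 2) ∧
          (∫ ξ in {ξ : ℝ | |ξ| ≤ 1}, (phi m (1 / 2) P₁ t |ξ|) ^ 2) ≤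
            C₂ / m ^ 2 * P₁ ^ 2 * Real.log t := by
  obtain ⟨t₀, ht₀⟩ := eventually_atTop.1 ((eventually_log_le_integral_profileSq hm).and
    (eventually_integral_profileSq_le hm))
  refine ⟨(m ^ 2 + 2) / (4 * exp 1 * (1 + m ^ 2)), 2 * (m ^ 2 + 4), max t₀ 2, by positivity,
    by positivity, lt_max_of_lt_right one_lt_two, fun t ht P₁ => ?_⟩
  obtain ⟨hlow, hup⟩ := ht₀ t (le_of_max_le_left ht)
  have hset : {ξ : ℝ | |ξ| ≤ 1} = Icc (-1) 1 := by ext; simp [abs_le]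
  have hint : ∫ ξ in {ξ : ℝ | |ξ| ≤ 1}, phi m (1 / 2) P₁ t |ξ| ^ 2 =
      P₁ ^ 2 * (2 * ∫ r in 0..1, profileSq m t r) := by
    simp_rw [hset, phi_sq m P₁ t (abs_nonneg _)]
    rw [integral_const_mul, integral_Icc_comp_abs _ zero_le_one]
  rw [hint]
  constructor
  · calc (m ^ 2 + 2) / (4 * exp 1 * (1 + m ^ 2)) / (m ^ 2 + 2) * P₁ ^ 2 * log t
        = P₁ ^ 2 * (2 * (log t / (8 * exp 1 * (1 + m ^ 2)))) := by field_simp; ring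
      _ ≤ P₁ ^ 2 * (2 * ∫ r in 0..1, profileSq m t r) := by gcongr
  · calc P₁ ^ 2 * (2 * ∫ r in 0..1, profileSq m t r)
        ≤ P₁ ^ 2 * (2 * ((1 + 4 / m ^ 2) * log t)) := by gcongr
      _ = 2 * (m ^ 2 + 4) / m ^ 2 * P₁ ^ 2 * log t := by field_simp

end
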